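/- Let D : ℝ × ℝ² → ℝ be twice continuously differentiable with ∇D ≠ 0 on a neighborhood of the segment {(t₁, (1−s)r₀ + s r₁) : s ∈ [0,1]} for a fixed time t₁ and points r₀, r₁ ∈ ℝ². Suppose φ : [0,1] → ℝ is a differentiable angle lift of the gradient along the segment ξ(s) := (1−s)r₀ + s r₁, i.e., ∇D(t₁, ξ(s)) = ‖∇D(t₁, ξ(s))‖·(cos φ(s), sin φ(s)) for all s. Then φ′(s) = κ(t₁,ξ(s))·⟨r₁ − r₀, T(t₁,ξ(s))⟩ − τ_ρ(t₁,ξ(s))·⟨r₁ − r₀, N(t₁,ξ(s))⟩ for every s, hence |φ′(s)| ≤ ‖r₁ − r₀‖·√(κ(t₁,ξ(s))² + τ_ρ(t₁,ξ(s))²) and |φ(1) − φ(0)| ≤ ‖r₁ − r₀‖·sup_{s ∈ [0,1]} √(κ(t₁,ξ(s))² + τ_ρ(t₁,ξ(s))²). -/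

import Mathlib

/-!
Write `T₀` for the unit tangent at `s₀`. On the curve, `∇D = ρ (cos φ, sin φ)` gives
`⟪∇D(γ s), T₀⟫ = ρ(s) sin (φ s₀ - φ s)`, and differentiating at `s₀` yields
`⟪D″γ', T⟫ = -ρ φ'`. Expanding `γ'` in the orthonormal frame `(T, N)` rewrites the left-hand side
as `ρ (τ_ρ ⟪γ', N⟫ - κ ⟪γ', T⟫)`, which is the formula for `φ'`. Cauchy–Schwarz then bounds `|φ'|`;
`κ` and `τ_ρ` are continuous where `∇D ≠ 0`, so their supremum over the compact segment is finite
and the mean value inequality bounds `φ 1 - φ 0`.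
-/


open Real Set
open scoped RealInnerProductSpace
noncomputable section

/-- The plane ℝ². -/
abbrev Plane := EuclideanSpace ℝ (Fin 2)

/-- Spatial gradient ∇D of the field. -/
def sgrad (D : ℝ × Plane → ℝ) (t : ℝ) (r : Plane) : Plane :=
  gradient (fun p => D (t, p)) r

/-- Partial time derivative D′_t of the field. -/
def dT (D : ℝ × Plane → ℝ) (t : ℝ) (r : Plane) : ℝ :=
  deriv (fun s => D (s, r)) t

/-- Second partial time derivative D″_tt of the field. -/
def dTT (D : ℝ × Plane → ℝ) (t : ℝ) (r : Plane) : ℝ :=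
  deriv (fun s => dT D s r) t

/-- Spatial gradient ∇D′_t of the partial time derivative. -/
def sgradDt (D : ℝ × Plane → ℝ) (t : ℝ) (r : Plane) : Plane :=
  gradient (fun p => dT D t p) r

/-- Spatial Hessian D″ applied to a vector v. -/
def hess (D : ℝ × Plane → ℝ) (t : ℝ) (r : Plane) (v : Plane) : Plane :=
  fderiv ℝ (fun p => sgrad D t p) r v

/-- Clockwise rotation through π/2, i.e. R_{−π/2}. -/
def rotCW (v : Plane) : Plane := !₂[v 1, -(v 0)]

/-- The unit normal N = ∇D/‖∇D‖ of the isoline. -/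
def unitN (D : ℝ × Plane → ℝ) (t : ℝ) (r : Plane) : Plane :=
  ‖sgrad D t r‖⁻¹ • sgrad D t r

/-- The unit tangent T = R_{−π/2} N of the isoline. -/
def unitT (D : ℝ × Plane → ℝ) (t : ℝ) (r : Plane) : Plane :=
  rotCW (unitN D t r)

/-- The density of isolines ρ = ‖∇D‖. -/
def rho (D : ℝ × Plane → ℝ) (t : ℝ) (r : Plane) : ℝ := ‖sgrad D t r‖

/-- The front velocity λ = −D′_t/‖∇D‖ of the isoline. -/
def lam (D : ℝ × Plane → ℝ) (t : ℝ) (r : Plane) : ℝ :=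
  -(dT D t r) / ‖sgrad D t r‖

/-- The proportional growth rate v_ρ = ⟨∇D′_t + λD″N, N⟩/‖∇D‖ of the density ρ
    along the moving isoline. -/
def vRho (D : ℝ × Plane → ℝ) (t : ℝ) (r : Plane) : ℝ :=
  ⟪sgradDt D t r + lam D t r • hess D t r (unitN D t r), unitN D t r⟫ / ‖sgrad D t r‖

/-- The angular velocity ω = −⟨∇D′_t + λD″N, T⟩/‖∇D‖ of rotation of the isoline. -/
def omg (D : ℝ × Plane → ℝ) (t : ℝ) (r : Plane) : ℝ :=
  -⟪sgradDt D t r + lam D t r • hess D t r (unitN D t r), unitT D t r⟫ / ‖sgrad D t r‖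

/-- The front acceleration α of the isoline. -/
def alph (D : ℝ × Plane → ℝ) (t : ℝ) (r : Plane) : ℝ :=
  -(dTT D t r + lam D t r * ⟪sgradDt D t r, unitN D t r⟫) / ‖sgrad D t r‖
    - lam D t r * vRho D t r

/-- The signed curvature κ = −⟨D″T, T⟩/‖∇D‖ of the isoline. -/
def kap (D : ℝ × Plane → ℝ) (t : ℝ) (r : Plane) : ℝ :=
  -⟪hess D t r (unitT D t r), unitT D t r⟫ / ‖sgrad D t r‖

/-- The proportional growth rate τ_ρ = ⟨D″N, T⟩/‖∇D‖ of the density ρ under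
    tangential displacement. -/
def tauRho (D : ℝ × Plane → ℝ) (t : ℝ) (r : Plane) : ℝ :=
  ⟪hess D t r (unitN D t r), unitT D t r⟫ / ‖sgrad D t r‖

/-- The proportional growth rate n_ρ = ⟨D″N, N⟩/‖∇D‖ of the density ρ under
    normal displacement. -/
def nRho (D : ℝ × Plane → ℝ) (t : ℝ) (r : Plane) : ℝ :=
  ⟪hess D t r (unitN D t r), unitN D t r⟫ / ‖sgrad D t r‖

/-- The angular velocity ω_∇ = −⟨∇D′_t, T⟩/‖∇D‖ of rotation of the gradient. -/
def omgGrad (D : ℝ × Plane → ℝ) (t : ℝ) (r : Plane) : ℝ :=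
  -⟪sgradDt D t r, unitT D t r⟫ / ‖sgrad D t r‖

/-- The unit velocity-orientation vector e(θ) = (cos θ, sin θ). -/
def eVec (θ : ℝ) : Plane := !₂[Real.cos θ, Real.sin θ]

lemma norm_sq_eq_sq_add_sq (v : Plane) : ‖v‖ ^ 2 = v 0 ^ 2 + v 1 ^ 2 := by
  simp [EuclideanSpace.norm_sq_eq, Fin.sum_univ_two]

lemma norm_eVec (θ : ℝ) : ‖eVec θ‖ = 1 := by
  rw [← sq_eq_sq₀ (norm_nonneg _) zero_le_one, norm_sq_eq_sq_add_sq]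
  simp [eVec, Real.cos_sq_add_sin_sq]

lemma inner_eVec_rotCW_eVec (θ θ₀ : ℝ) : ⟪eVec θ, rotCW (eVec θ₀)⟫ = Real.sin (θ₀ - θ) := by
  simp [eVec, rotCW, PiLp.inner_apply, Fin.sum_univ_two, Real.sin_sub]
  ring

lemma continuous_rotCW : Continuous rotCW := by
  unfold rotCW; fun_prop

lemma inner_rotCW_smul_rotCW_add_inner_smul {v : Plane} (hv : ‖v‖ = 1) (w : Plane) :
    ⟪w, rotCW v⟫ • rotCW v + ⟪w, v⟫ • v = w := by
  have hv2 := norm_sq_eq_sq_add_sq v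
  rw [hv, one_pow] at hv2
  ext i
  fin_cases i <;> simp [rotCW, PiLp.inner_apply, Fin.sum_univ_two]
  · linear_combination -w 0 * hv2
  · linear_combination -w 1 * hv2

lemma inner_rotCW_sq_add_inner_sq {v : Plane} (hv : ‖v‖ = 1) (w : Plane) :
    ⟪w, rotCW v⟫ ^ 2 + ⟪w, v⟫ ^ 2 = ‖w‖ ^ 2 := by
  have hv2 := norm_sq_eq_sq_add_sq v
  rw [hv, one_pow] at hv2
  simp [norm_sq_eq_sq_add_sq, rotCW, PiLp.inner_apply, Fin.sum_univ_two]
  linear_combination -(w 0 ^ 2 + w 1 ^ 2) * hv2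

lemma abs_mul_sub_mul_le_mul_sqrt {κ τ a b c : ℝ} (habc : a ^ 2 + b ^ 2 = c ^ 2) (hc : 0 ≤ c) :
    |κ * a - τ * b| ≤ c * √(κ ^ 2 + τ ^ 2) := by
  rw [← Real.sqrt_sq hc, ← Real.sqrt_mul (sq_nonneg c), ← Real.sqrt_sq_eq_abs]
  exact Real.sqrt_le_sqrt (by nlinarith [sq_nonneg (κ * b + τ * a)])

section ScalarField

variable {D : ℝ × Plane → ℝ} {t : ℝ} {r : Plane}

lemma contDiffAt_sgrad (h : ContDiffAt ℝ 2 D (t, r)) : ContDiffAt ℝ 1 (sgrad D t) r := by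
  have hslice : ContDiffAt ℝ 2 (fun p : Plane => D (t, p)) r :=
    h.comp r (contDiffAt_const.prodMk contDiffAt_id)
  exact (InnerProductSpace.toDual ℝ Plane).symm.contDiff.contDiffAt.comp r
    (hslice.fderiv_right (by norm_num))

lemma continuousAt_fderiv_sgrad (h : ContDiffAt ℝ 2 D (t, r)) :
    ContinuousAt (fderiv ℝ (sgrad D t)) r :=
  ((contDiffAt_sgrad h).fderiv_right (m := 0) le_rfl).continuousAt

lemma continuousAt_unitN (h : ContDiffAt ℝ 2 D (t, r)) (hr : sgrad D t r ≠ 0) :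
    ContinuousAt (unitN D t) r := by
  have hg := (contDiffAt_sgrad h).continuousAt
  exact (hg.norm.inv₀ (norm_ne_zero_iff.2 hr)).smul hg

lemma continuousAt_unitT (h : ContDiffAt ℝ 2 D (t, r)) (hr : sgrad D t r ≠ 0) :
    ContinuousAt (unitT D t) r :=
  continuous_rotCW.continuousAt.comp (continuousAt_unitN h hr)

lemma continuousAt_kap (h : ContDiffAt ℝ 2 D (t, r)) (hr : sgrad D t r ≠ 0) :
    ContinuousAt (kap D t) r := by
  have hT := continuousAt_unitT h hr
  exact (((continuousAt_fderiv_sgrad h).clm_apply hT).inner hT).neg.div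
    (contDiffAt_sgrad h).continuousAt.norm (norm_ne_zero_iff.2 hr)

lemma continuousAt_tauRho (h : ContDiffAt ℝ 2 D (t, r)) (hr : sgrad D t r ≠ 0) :
    ContinuousAt (tauRho D t) r :=
  (((continuousAt_fderiv_sgrad h).clm_apply (continuousAt_unitN h hr)).inner
    (continuousAt_unitT h hr)).div (contDiffAt_sgrad h).continuousAt.norm
    (norm_ne_zero_iff.2 hr)

lemma norm_unitN (hr : sgrad D t r ≠ 0) : ‖unitN D t r‖ = 1 :=
  norm_smul_inv_norm hr

lemma inner_hess_unitT_eq (hr : sgrad D t r ≠ 0) (v : Plane) :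
    ⟪hess D t r v, unitT D t r⟫
      = ‖sgrad D t r‖ * (tauRho D t r * ⟪v, unitN D t r⟫ - kap D t r * ⟪v, unitT D t r⟫) := by
  have hρ : ‖sgrad D t r‖ ≠ 0 := norm_ne_zero_iff.2 hr
  have hv : ⟪v, unitT D t r⟫ • unitT D t r + ⟪v, unitN D t r⟫ • unitN D t r = v :=
    inner_rotCW_smul_rotCW_add_inner_smul (norm_unitN hr) v
  conv_lhs => rw [← hv]
  simp only [kap, tauRho, hess, map_add, map_smul, inner_add_left, real_inner_smul_left]
  field_simp
  ring

lemma unitN_eq_eVec {θ : ℝ} (hr : sgrad D t r ≠ 0)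
    (hθ : sgrad D t r = ‖sgrad D t r‖ • eVec θ) : unitN D t r = eVec θ := by
  rw [unitN, hθ, norm_smul, norm_eVec, mul_one, norm_norm, smul_smul,
    inv_mul_cancel₀ (norm_ne_zero_iff.2 hr), one_smul]

lemma hasDerivAt_sgrad_comp {γ : ℝ → Plane} {v : Plane} {s : ℝ}
    (h : ContDiffAt ℝ 2 D (t, γ s)) (hγ : HasDerivAt γ v s) :
    HasDerivAt (fun s => sgrad D t (γ s)) (hess D t (γ s) v) s :=
  ((contDiffAt_sgrad h).differentiableAt one_ne_zero).hasFDerivAt.comp_hasDerivAt s hγ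

end ScalarField

def IsGradAngleLiftOn (D : ℝ × Plane → ℝ) (t : ℝ) (γ : ℝ → Plane) (φ : ℝ → ℝ) (S : Set ℝ) :
    Prop :=
  ∀ s ∈ S, sgrad D t (γ s) = ‖sgrad D t (γ s)‖ • eVec (φ s)

namespace IsGradAngleLiftOn

variable {D : ℝ × Plane → ℝ} {t : ℝ} {γ : ℝ → Plane} {φ : ℝ → ℝ} {S : Set ℝ} {s₀ φ'₀ : ℝ}
  {v : Plane}

lemma inner_hess_unitT_eq_neg_mul_deriv (hlift : IsGradAngleLiftOn D t γ φ S)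
    (hS : UniqueDiffWithinAt ℝ S s₀) (hs₀ : s₀ ∈ S) (hD : ContDiffAt ℝ 2 D (t, γ s₀))
    (hr : sgrad D t (γ s₀) ≠ 0) (hγ : HasDerivAt γ v s₀) (hφ : HasDerivAt φ φ'₀ s₀) :
    ⟪hess D t (γ s₀) v, unitT D t (γ s₀)⟫ = -(‖sgrad D t (γ s₀)‖ * φ'₀) := by
  have hT : unitT D t (γ s₀) = rotCW (eVec (φ s₀)) := by
    rw [unitT, unitN_eq_eVec hr (hlift s₀ hs₀)]
  have hgrad := hasDerivAt_sgrad_comp hD hγ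
  have hinner := hgrad.inner ℝ (hasDerivAt_const s₀ (rotCW (eVec (φ s₀))))
  have hpolar : HasDerivAt (fun s => ‖sgrad D t (γ s)‖ * Real.sin (φ s₀ - φ s))
      (-(‖sgrad D t (γ s₀)‖ * φ'₀)) s₀ := by
    have hsin := ((hasDerivAt_const s₀ (φ s₀)).sub hφ).sin
    have hρ := (hgrad.differentiableAt.norm ℝ hr).hasDerivAt
    simpa using hρ.fun_mul hsin
  have heq : EqOn (fun s => ⟪sgrad D t (γ s), rotCW (eVec (φ s₀))⟫)
      (fun s => ‖sgrad D t (γ s)‖ * Real.sin (φ s₀ - φ s)) S := by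
    intro s hs
    simp only
    rw [hlift s hs, real_inner_smul_left, inner_eVec_rotCW_eVec, norm_smul, norm_eVec, mul_one,
      norm_norm]
  rw [hT]
  simpa using hS.eq_deriv S hinner.hasDerivWithinAt
    (hpolar.hasDerivWithinAt.congr heq (heq hs₀))

lemma deriv_eq (hlift : IsGradAngleLiftOn D t γ φ S)
    (hS : UniqueDiffWithinAt ℝ S s₀) (hs₀ : s₀ ∈ S) (hD : ContDiffAt ℝ 2 D (t, γ s₀))
    (hr : sgrad D t (γ s₀) ≠ 0) (hγ : HasDerivAt γ v s₀) (hφ : HasDerivAt φ φ'₀ s₀) :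
    φ'₀ = kap D t (γ s₀) * ⟪v, unitT D t (γ s₀)⟫ - tauRho D t (γ s₀) * ⟪v, unitN D t (γ s₀)⟫ := by
  have h := hlift.inner_hess_unitT_eq_neg_mul_deriv hS hs₀ hD hr hγ hφ
  rw [inner_hess_unitT_eq hr] at h
  have hρ : ‖sgrad D t (γ s₀)‖ ≠ 0 := norm_ne_zero_iff.2 hr
  apply mul_left_cancel₀ hρ
  linear_combination h

lemma abs_deriv_le (hlift : IsGradAngleLiftOn D t γ φ S)
    (hS : UniqueDiffWithinAt ℝ S s₀) (hs₀ : s₀ ∈ S) (hD : ContDiffAt ℝ 2 D (t, γ s₀))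
    (hr : sgrad D t (γ s₀) ≠ 0) (hγ : HasDerivAt γ v s₀) (hφ : HasDerivAt φ φ'₀ s₀) :
    |φ'₀| ≤ ‖v‖ * √(kap D t (γ s₀) ^ 2 + tauRho D t (γ s₀) ^ 2) := by
  rw [hlift.deriv_eq hS hs₀ hD hr hγ hφ]
  exact abs_mul_sub_mul_le_mul_sqrt (inner_rotCW_sq_add_inner_sq (norm_unitN hr) v)
    (norm_nonneg v)

end IsGradAngleLiftOn

lemma bddAbove_range_sqrt_kap_sq_add_tauRho_sq {D : ℝ × Plane → ℝ} {t : ℝ} {γ : ℝ → Plane}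
    {K : Set ℝ} (hK : IsCompact K) (hγ : ContinuousOn γ K)
    (hD : ∀ s ∈ K, ContDiffAt ℝ 2 D (t, γ s)) (hr : ∀ s ∈ K, sgrad D t (γ s) ≠ 0) :
    BddAbove (range fun s : K => √(kap D t (γ s) ^ 2 + tauRho D t (γ s) ^ 2)) := by
  rw [← image_eq_range (fun s => √(kap D t (γ s) ^ 2 + tauRho D t (γ s) ^ 2))]
  refine hK.bddAbove_image fun s hs => ?_
  have hkap := (continuousAt_kap (hD s hs) (hr s hs)).comp_continuousWithinAt (hγ s hs)
  have htau := (continuousAt_tauRho (hD s hs) (hr s hs)).comp_continuousWithinAt (hγ s hs)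
  exact ((hkap.pow 2).add (htau.pow 2)).sqrt

/-- a differentiable angle lift `φ` of the gradient along the segment
`ξ(s) = (1−s)r₀ + s·r₁` at a fixed time `t₁` satisfies
`φ′(s) = κ·⟨r₁ − r₀, T⟩ − τ_ρ·⟨r₁ − r₀, N⟩`, hence
`|φ′(s)| ≤ ‖r₁ − r₀‖·√(κ² + τ_ρ²)` and
`|φ(1) − φ(0)| ≤ ‖r₁ − r₀‖·sup_{s∈[0,1]} √(κ² + τ_ρ²)`. -/
theorem gradient_angle_lift_along_segment
    (D : ℝ × Plane → ℝ) (t₁ : ℝ) (r₀ r₁ : Plane)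
    (hD : ∀ s ∈ Icc (0:ℝ) 1, ContDiffAt ℝ 2 D (t₁, r₀ + s • (r₁ - r₀)))
    (hgrad : ∀ s ∈ Icc (0:ℝ) 1, sgrad D t₁ (r₀ + s • (r₁ - r₀)) ≠ 0)
    (φ φ' : ℝ → ℝ)
    (hφ : ∀ s ∈ Icc (0:ℝ) 1, HasDerivAt φ (φ' s) s)
    (hlift : ∀ s ∈ Icc (0:ℝ) 1,
      sgrad D t₁ (r₀ + s • (r₁ - r₀))
        = ‖sgrad D t₁ (r₀ + s • (r₁ - r₀))‖ • eVec (φ s)) :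
    (∀ s ∈ Icc (0:ℝ) 1,
      φ' s = kap D t₁ (r₀ + s • (r₁ - r₀)) * ⟪r₁ - r₀, unitT D t₁ (r₀ + s • (r₁ - r₀))⟫
        - tauRho D t₁ (r₀ + s • (r₁ - r₀)) * ⟪r₁ - r₀, unitN D t₁ (r₀ + s • (r₁ - r₀))⟫) ∧
    (∀ s ∈ Icc (0:ℝ) 1,
      |φ' s| ≤ ‖r₁ - r₀‖ * Real.sqrt ((kap D t₁ (r₀ + s • (r₁ - r₀))) ^ 2
        + (tauRho D t₁ (r₀ + s • (r₁ - r₀))) ^ 2)) ∧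
    |φ 1 - φ 0| ≤ ‖r₁ - r₀‖ * ⨆ s : Icc (0:ℝ) 1,
      Real.sqrt ((kap D t₁ (r₀ + (s:ℝ) • (r₁ - r₀))) ^ 2
        + (tauRho D t₁ (r₀ + (s:ℝ) • (r₁ - r₀))) ^ 2) := by
  have hγ (s : ℝ) : HasDerivAt (fun s : ℝ => r₀ + s • (r₁ - r₀)) (r₁ - r₀) s := by
    simpa using ((hasDerivAt_id s).smul_const (r₁ - r₀)).const_add r₀
  have hlift' : IsGradAngleLiftOn D t₁ (fun s => r₀ + s • (r₁ - r₀)) φ (Icc 0 1) := hlift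
  have hU : UniqueDiffOn ℝ (Icc (0:ℝ) 1) := uniqueDiffOn_Icc one_pos
  have habs (s : ℝ) (hs : s ∈ Icc (0:ℝ) 1) := hlift'.abs_deriv_le (hU s hs) hs (hD s hs)
    (hgrad s hs) (hγ s) (hφ s hs)
  refine ⟨fun s hs => hlift'.deriv_eq (hU s hs) hs (hD s hs) (hgrad s hs) (hγ s) (hφ s hs),
    habs, ?_⟩
  have hbdd := bddAbove_range_sqrt_kap_sq_add_tauRho_sq isCompact_Icc
    (fun s _ => (hγ s).continuousAt.continuousWithinAt) hD hgrad
  simpa using norm_image_sub_le_of_norm_deriv_le_segment_01'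
    (fun s hs => (hφ s hs).hasDerivWithinAt) fun s hs =>
      (habs s (Ico_subset_Icc_self hs)).trans <| mul_le_mul_of_nonneg_left
        (le_ciSup hbdd ⟨s, Ico_subset_Icc_self hs⟩) (norm_nonneg _)
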